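/- Let n ≥ 3 and let (s_i, s_j, s_k) be a triple of reflections in D_n. Then the Hurwitz (braid) orbit of (s_i, s_j, s_k) under the B_3-action contains a triple of the form (s_{i'}, s_{j'}, s_{j'}) (last two entries equal) and also a triple of the form (s_{i''}, s_{i''}, s_{j''}) (first two entries equal). In particular, the subgroup generated by the three reflections is generated by the first two entries of a suitable triple in the Hurwitz orbit. -/

import Mathlib

/-- One elementary braid (Hurwitz) move on a tuple of elements of a group `G`,
encoded as a list: `σᵢ` replaces the adjacent pair `(a, b)` occurring at some
position by `(a * b * a⁻¹, a)`. -/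
inductive BraidStep {G : Type*} [Group G] : List G → List G → Prop
  | head (a b : G) (t : List G) : BraidStep (a :: b :: t) (a * b * a⁻¹ :: a :: t)
  | tail (a : G) {l₁ l₂ : List G} : BraidStep l₁ l₂ → BraidStep (a :: l₁) (a :: l₂)

/-- Hurwitz (braid) equivalence: the equivalence relation generated by
elementary braid moves (so finitely many moves and their inverses). -/
def HurwitzEquiv {G : Type*} [Group G] : List G → List G → Prop :=
  Relation.EqvGen BraidStep

/-- Braid-automorphism equivalence: `v` and `w` differ by a braid move sequence
together with the diagonal action of a group automorphism. -/
def BAEquiv {G : Type*} [Group G] (v w : List G) : Prop :=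
  ∃ φ : G ≃* G, HurwitzEquiv (v.map ⇑φ) w

/-- A `G`-Hurwitz vector (genus 0): all entries nontrivial, the entries
generate `G`, and the product of the entries is `1`. -/
def IsHurwitzVector {G : Type*} [Group G] (v : List G) : Prop :=
  (∀ c ∈ v, c ≠ 1) ∧ Subgroup.closure {g | g ∈ v} = ⊤ ∧ v.prod = 1

/-- The reflection `s i = x^i * y` of the dihedral group `D_n`,
where `x = DihedralGroup.r 1` and `y = DihedralGroup.sr 0`. -/
def sD {n : ℕ} (i : ZMod n) : DihedralGroup n :=
  DihedralGroup.r i * DihedralGroup.sr 0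

/-- Being a reflection in the dihedral group. -/
def IsReflection {n : ℕ} (g : DihedralGroup n) : Prop :=
  ∃ i : ZMod n, g = DihedralGroup.sr i

/-! The braid moves act on a triple of reflections `(s_i, s_{i+a}, s_{i+a+b})` through the
differences `(a, b)` by the elementary column operations `(a, b) ↦ (a - b, b)` and
`(a, b) ↦ (a, b + a)`, while `i` may move. These generate the rotation `(a, b) ↦ (b, -a)`, so the
Euclidean algorithm drives `b` to `0`, and one more rotation drives `a` to `0`. Braid moves
replace an entry by a conjugate by a neighbouring entry, so they preserve the generated subgroup. -/

section Hurwitz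

variable {G : Type*} [Group G]

theorem HurwitzEquiv.refl (v : List G) : HurwitzEquiv v v :=
  Relation.EqvGen.refl v

theorem HurwitzEquiv.symm {v w : List G} (h : HurwitzEquiv v w) : HurwitzEquiv w v :=
  Relation.EqvGen.symm _ _ h

theorem HurwitzEquiv.trans {u v w : List G} (h : HurwitzEquiv u v) (h' : HurwitzEquiv v w) :
    HurwitzEquiv u w :=
  Relation.EqvGen.trans _ _ _ h h'

theorem BraidStep.hurwitzEquiv {v w : List G} (h : BraidStep v w) : HurwitzEquiv v w :=
  Relation.EqvGen.rel _ _ h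

theorem BraidStep.forall_mem_iff {v w : List G} (h : BraidStep v w) (H : Subgroup G) :
    (∀ x ∈ v, x ∈ H) ↔ ∀ x ∈ w, x ∈ H := by
  induction h with
  | head a b t =>
    simp only [List.forall_mem_cons]
    constructor
    · rintro ⟨ha, hb, ht⟩
      exact ⟨H.mul_mem (H.mul_mem ha hb) (H.inv_mem ha), ha, ht⟩
    · rintro ⟨hc, ha, ht⟩
      rw [H.mul_mem_cancel_right (H.inv_mem ha), H.mul_mem_cancel_left ha] at hc
      exact ⟨ha, hc, ht⟩
  | tail a _ ih => simp only [List.forall_mem_cons, ih]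

theorem HurwitzEquiv.forall_mem_iff {v w : List G} (h : HurwitzEquiv v w) (H : Subgroup G) :
    (∀ x ∈ v, x ∈ H) ↔ ∀ x ∈ w, x ∈ H := by
  induction h with
  | rel _ _ hs => exact hs.forall_mem_iff H
  | refl => rfl
  | symm _ _ _ ih => exact ih.symm
  | trans _ _ _ _ _ ih₁ ih₂ => exact ih₁.trans ih₂

theorem HurwitzEquiv.closure_eq {v w : List G} (h : HurwitzEquiv v w) :
    Subgroup.closure {g | g ∈ v} = Subgroup.closure {g | g ∈ w} :=
  eq_of_forall_ge_iff fun H => by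
    simp only [Subgroup.closure_le]
    exact h.forall_mem_iff H

end Hurwitz

section Dihedral

variable {n : ℕ}

theorem sD_eq_sr (i : ZMod n) : sD i = DihedralGroup.sr (-i) := by
  simp [sD]

theorem sD_inv (i : ZMod n) : (sD i)⁻¹ = sD i :=
  inv_eq_of_mul_eq_one_right (by rw [sD_eq_sr]; exact DihedralGroup.sr_mul_self _)

theorem sD_conj (i j : ZMod n) : sD i * sD j * (sD i)⁻¹ = sD (2 * i - j) := by
  rw [sD_inv]
  simp only [sD_eq_sr, DihedralGroup.sr_mul_sr, DihedralGroup.r_mul_sr]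
  ring_nf

def reflTriple (i : ZMod n) (a b : ℤ) : List (DihedralGroup n) :=
  [sD i, sD (i + a : ZMod n), sD (i + a + b : ZMod n)]

theorem hurwitzEquiv_reflTriple_sub (i : ZMod n) (a b : ℤ) :
    HurwitzEquiv (reflTriple i a b) (reflTriple i (a - b) b) := by
  have h :=
    BraidStep.tail (sD i) (BraidStep.head (sD (i + a : ZMod n)) (sD (i + a + b : ZMod n)) [])
  rw [sD_conj] at h
  convert h.hurwitzEquiv using 2 <;> simp only [reflTriple]
  push_cast
  ring_nf

theorem hurwitzEquiv_reflTriple_add (i : ZMod n) (a b : ℤ) :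
    HurwitzEquiv (reflTriple i a b) (reflTriple (i - a) a (b + a)) := by
  have h := BraidStep.head (sD i) (sD (i + a : ZMod n)) [sD (i + a + b : ZMod n)]
  rw [sD_conj] at h
  convert h.hurwitzEquiv using 2 <;> simp only [reflTriple]
  push_cast
  ring_nf

theorem hurwitzEquiv_reflTriple_sub_mul (i : ZMod n) (a b m : ℤ) :
    HurwitzEquiv (reflTriple i a b) (reflTriple i (a - m * b) b) := by
  induction m using Int.induction_on with
  | zero => simpa using HurwitzEquiv.refl _
  | succ m ih =>
    convert ih.trans (hurwitzEquiv_reflTriple_sub i (a - m * b) b) using 2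
    ring
  | pred m ih =>
    refine ih.trans (HurwitzEquiv.symm ?_)
    convert hurwitzEquiv_reflTriple_sub i (a - (-m - 1) * b) b using 2
    ring

theorem exists_hurwitzEquiv_reflTriple_rotate (i : ZMod n) (a b : ℤ) :
    ∃ i', HurwitzEquiv (reflTriple i a b) (reflTriple i' b (-a)) := by
  set j : ZMod n := i + (a + b : ℤ)
  have h₁ : HurwitzEquiv (reflTriple i a b) (reflTriple i (a + b) b) := by
    simpa using hurwitzEquiv_reflTriple_sub_mul i a b (-1)
  have h₂ : HurwitzEquiv (reflTriple i (a + b) b) (reflTriple j (a + b) (-a)) := by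
    simpa [j] using (hurwitzEquiv_reflTriple_add j (a + b) (-a)).symm
  have h₃ : HurwitzEquiv (reflTriple j (a + b) (-a)) (reflTriple j b (-a)) := by
    simpa using hurwitzEquiv_reflTriple_sub_mul j (a + b) (-a) (-1)
  exact ⟨j, (h₁.trans h₂).trans h₃⟩

theorem exists_hurwitzEquiv_reflTriple_snd_eq_zero (i : ZMod n) (a b : ℤ) :
    ∃ i' g, HurwitzEquiv (reflTriple i a b) (reflTriple i' g 0) := by
  induction hb : b.natAbs using Nat.strong_induction_on generalizing i a b with
  | _ m ih =>
    rcases eq_or_ne b 0 with rfl | hb₀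
    · exact ⟨i, a, HurwitzEquiv.refl _⟩
    have h₁ := hurwitzEquiv_reflTriple_sub_mul i a b (a / b)
    obtain ⟨i₂, h₂⟩ := exists_hurwitzEquiv_reflTriple_rotate i (a - a / b * b) b
    have hlt : (-(a - a / b * b)).natAbs < m := by
      rw [← hb, Int.natAbs_neg, mul_comm, ← Int.emod_def]
      have := Int.emod_nonneg a hb₀
      have := Int.emod_lt a hb₀
      omega
    obtain ⟨i₃, g, h₃⟩ := ih _ hlt i₂ b _ rfl
    exact ⟨i₃, g, (h₁.trans h₂).trans h₃⟩

theorem exists_hurwitzEquiv_reflTriple_fst_eq_zero (i : ZMod n) (a b : ℤ) :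
    ∃ i' g, HurwitzEquiv (reflTriple i a b) (reflTriple i' 0 g) := by
  obtain ⟨i₁, g, h₁⟩ := exists_hurwitzEquiv_reflTriple_snd_eq_zero i a b
  obtain ⟨i₂, h₂⟩ := exists_hurwitzEquiv_reflTriple_rotate i₁ g 0
  exact ⟨i₂, -g, h₁.trans h₂⟩

end Dihedral

theorem reflection_triple_normalization_general (n : ℕ) (i j k : ZMod n) :
    (∃ i' j' : ZMod n,
      HurwitzEquiv [sD i, sD j, sD k] [sD i', sD j', sD j']) ∧
    (∃ i'' j'' : ZMod n,
      HurwitzEquiv [sD i, sD j, sD k] [sD i'', sD i'', sD j'']) ∧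
    (∃ a b c : ZMod n,
      HurwitzEquiv [sD i, sD j, sD k] [sD a, sD b, sD c] ∧
      Subgroup.closure ({sD i, sD j, sD k} : Set (DihedralGroup n)) =
        Subgroup.closure ({sD a, sD b} : Set (DihedralGroup n))) := by
  obtain ⟨a, ha⟩ := ZMod.intCast_surjective (j - i)
  obtain ⟨b, hb⟩ := ZMod.intCast_surjective (k - j)
  have hT : reflTriple i a b = [sD i, sD j, sD k] := by simp [reflTriple, ha, hb]
  obtain ⟨i₁, g₁, h₁⟩ := exists_hurwitzEquiv_reflTriple_snd_eq_zero i a b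
  obtain ⟨i₂, g₂, h₂⟩ := exists_hurwitzEquiv_reflTriple_fst_eq_zero i a b
  rw [hT] at h₁ h₂
  simp only [reflTriple, Int.cast_zero, add_zero] at h₁ h₂
  refine ⟨⟨_, _, h₁⟩, ⟨_, _, h₂⟩, _, _, _, h₁, ?_⟩
  convert h₁.closure_eq using 2 <;> ext <;> simp

/-- normalization of reflection triples.  The Hurwitz orbit of a triple of
reflections `(s_i, s_j, s_k)` in `D_n` contains a triple whose last two entries are equal and
a triple whose first two entries are equal; in particular the subgroup generated by the three
reflections is generated by the first two entries of a suitable triple in the Hurwitz orbit. -/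
theorem reflection_triple_normalization (n : ℕ) (hn : 3 ≤ n) (i j k : ZMod n) :
    (∃ i' j' : ZMod n,
      HurwitzEquiv [sD i, sD j, sD k] [sD i', sD j', sD j']) ∧
    (∃ i'' j'' : ZMod n,
      HurwitzEquiv [sD i, sD j, sD k] [sD i'', sD i'', sD j'']) ∧
    (∃ a b c : ZMod n,
      HurwitzEquiv [sD i, sD j, sD k] [sD a, sD b, sD c] ∧
      Subgroup.closure ({sD i, sD j, sD k} : Set (DihedralGroup n)) =
        Subgroup.closure ({sD a, sD b} : Set (DihedralGroup n))) :=
  reflection_triple_normalization_general n i j k
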